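/- arXiv:2111.05670 — 2 statements merged into one kernel-verified Lean document; each statement's English description precedes it below -/
import Mathlib

section
/- Combined one-step bound: let Φ ⊆ R^n be nonempty closed convex, L : R^n → R differentiable and L₀-smooth, φ* ∈ Φ, τ, G > 0, φ ∈ Φ, and φ⁺ = Proj_Φ(φ − τ·Clip(∇L(φ))). With F(φ) = min(1, G/‖∇L(φ)‖) (=1 if ∇L(φ)=0), one has ‖φ⁺ − φ*‖² ≤ (1 + τ·F(φ)·L₀)‖φ − φ*‖² + τ·(2F(φ)·(L(φ*) − L(φ)) + τG²). -/
open RealInnerProductSpace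

noncomputable def Clip {n : ℕ} (G : ℝ) (v : EuclideanSpace ℝ (Fin n)) :
    EuclideanSpace ℝ (Fin n) :=
  if ‖v‖ ≤ G then v else (G / ‖v‖) • v

open Classical in
noncomputable def clipFactor {n : ℕ} (G : ℝ) (v : EuclideanSpace ℝ (Fin n)) : ℝ :=
  if v = 0 then 1 else min 1 (G / ‖v‖)

/-! Projection makes distances to points of `Φ` shrink, so `‖φ⁺ - φ*‖²` is at most
`‖φ - φ*‖² - 2τF⟪∇L(φ), φ - φ*⟫ + τ²‖Clip ∇L(φ)‖²`, since `Clip v = F(v) • v`. The clipped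
step has norm at most `G`, and the cross term is controlled by the quadratic lower bound
that `L₀`-smoothness gives on `L` along the segment from `φ` to `φ*`. -/

section Smoothness

variable {E : Type*} [NormedAddCommGroup E] [InnerProductSpace ℝ E] [CompleteSpace E]

theorem HasGradientAt.hasDerivAt_comp_add_smul {L : E → ℝ} {g x v : E} {t : ℝ}
    (h : HasGradientAt L g (x + t • v)) :
    HasDerivAt (fun s : ℝ => L (x + s • v)) ⟪g, v⟫ t := by
  have hline : HasDerivAt (fun s : ℝ => x + s • v) v t := by
    simpa using ((hasDerivAt_id t).smul_const v).const_add x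
  exact (h.hasFDerivAt.comp_hasDerivAt t hline).congr_deriv
    (by simp [InnerProductSpace.toDual_apply_apply])

theorem inner_gradient_le_of_lipschitz_gradient {L : E → ℝ} {L₀ : ℝ} (hdiff : Differentiable ℝ L)
    {x : E} (hsmooth : ∀ z, ‖gradient L x - gradient L z‖ ≤ L₀ * ‖x - z‖) (y : E) :
    ⟪gradient L x, y - x⟫ ≤ L y - L x + L₀ / 2 * ‖y - x‖ ^ 2 := by
  set v := y - x
  set g := gradient L x
  -- the claim is `ψ 0 ≤ ψ 1`, and `ψ` is monotone on `t ≥ 0` by smoothness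
  set ψ : ℝ → ℝ := fun t => L (x + t • v) - t * ⟪g, v⟫ + L₀ / 2 * ‖v‖ ^ 2 * t ^ 2
  have hψ : ∀ t, HasDerivAt ψ (⟪gradient L (x + t • v), v⟫ - ⟪g, v⟫ + L₀ * ‖v‖ ^ 2 * t) t := by
    intro t
    have hline : HasDerivAt (fun s : ℝ => L (x + s • v)) ⟪gradient L (x + t • v), v⟫ t :=
      (hdiff _).hasGradientAt.hasDerivAt_comp_add_smul
    have hquad := (hasDerivAt_pow 2 t).const_mul (L₀ / 2 * ‖v‖ ^ 2)
    refine ((hline.sub ((hasDerivAt_id t).mul_const ⟪g, v⟫)).add hquad).congr_deriv ?_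
    push_cast
    ring
  have hψ'_nonneg : ∀ t ∈ interior (Set.Ici (0 : ℝ)),
      0 ≤ ⟪gradient L (x + t • v), v⟫ - ⟪g, v⟫ + L₀ * ‖v‖ ^ 2 * t := by
    intro t ht
    rw [interior_Ici, Set.mem_Ioi] at ht
    have hcs : ⟪g - gradient L (x + t • v), v⟫ ≤ L₀ * ‖v‖ ^ 2 * t :=
      calc ⟪g - gradient L (x + t • v), v⟫ ≤ ‖g - gradient L (x + t • v)‖ * ‖v‖ :=
            real_inner_le_norm _ _
        _ ≤ L₀ * ‖x - (x + t • v)‖ * ‖v‖ := by gcongr; exact hsmooth _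
        _ = L₀ * ‖v‖ ^ 2 * t := by
            rw [sub_add_cancel_left, norm_neg, norm_smul, Real.norm_of_nonneg ht.le]
            ring
    rw [inner_sub_left] at hcs
    linarith
  have hmono : MonotoneOn ψ (Set.Ici 0) :=
    monotoneOn_of_hasDerivWithinAt_nonneg (convex_Ici 0)
      (fun t _ => (hψ t).continuousAt.continuousWithinAt)
      (fun t _ => (hψ t).hasDerivWithinAt) hψ'_nonneg
  have h01 : ψ 0 ≤ ψ 1 := hmono Set.self_mem_Ici (Set.mem_Ici.mpr zero_le_one) zero_le_one
  simp only [ψ, zero_smul, add_zero, zero_mul, sub_zero, one_smul, one_mul, v,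
    add_sub_cancel] at h01
  linarith

end Smoothness

theorem Convex.norm_sub_le_of_forall_norm_sub_le {F : Type*} [NormedAddCommGroup F]
    [InnerProductSpace ℝ F] {K : Set F} (hK : Convex ℝ K) {x p z : F} (hp : p ∈ K)
    (hmin : ∀ y ∈ K, ‖x - p‖ ≤ ‖x - y‖) (hz : z ∈ K) : ‖p - z‖ ≤ ‖x - z‖ := by
  have hinf : ‖x - p‖ = ⨅ w : K, ‖x - w‖ := by
    have : Nonempty K := ⟨⟨p, hp⟩⟩
    refine le_antisymm (le_ciInf fun w => hmin w w.2) ?_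
    exact ciInf_le ⟨0, by rintro _ ⟨w, rfl⟩; exact norm_nonneg _⟩ (⟨p, hp⟩ : K)
  have hvar : ⟪x - p, z - p⟫ ≤ 0 := (norm_eq_iInf_iff_real_inner_le_zero hK hp).mp hinf z hz
  have hexpand : ‖x - z‖ ^ 2 = ‖x - p‖ ^ 2 - 2 * ⟪x - p, z - p⟫ + ‖p - z‖ ^ 2 := by
    rw [← sub_add_sub_cancel x p z, norm_add_sq_real, ← neg_sub z p, inner_neg_right]
    ring
  have hsq : ‖p - z‖ ^ 2 ≤ ‖x - z‖ ^ 2 := by nlinarith [sq_nonneg ‖x - p‖]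
  exact (pow_le_pow_iff_left₀ (norm_nonneg _) (norm_nonneg _) two_ne_zero).mp hsq

section Clipping

variable {n : ℕ}

theorem Clip_eq_clipFactor_smul (G : ℝ) (v : EuclideanSpace ℝ (Fin n)) :
    Clip G v = clipFactor G v • v := by
  rcases eq_or_ne v 0 with rfl | hv
  · simp [Clip]
  have hpos : 0 < ‖v‖ := norm_pos_iff.mpr hv
  rw [Clip, clipFactor, if_neg hv]
  split_ifs with hle
  · rw [min_eq_left ((one_le_div hpos).mpr hle), one_smul]
  · rw [min_eq_right ((div_le_one hpos).mpr (not_le.mp hle).le)]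

theorem clipFactor_nonneg {G : ℝ} (hG : 0 ≤ G) (v : EuclideanSpace ℝ (Fin n)) :
    0 ≤ clipFactor G v := by
  unfold clipFactor
  split_ifs
  · exact zero_le_one
  · exact le_min zero_le_one (div_nonneg hG (norm_nonneg v))

theorem norm_Clip_le {G : ℝ} (hG : 0 ≤ G) (v : EuclideanSpace ℝ (Fin n)) : ‖Clip G v‖ ≤ G := by
  unfold Clip
  split_ifs with hle
  · exact hle
  · have hpos : 0 < ‖v‖ := hG.trans_lt (not_le.mp hle)
    rw [norm_smul, Real.norm_of_nonneg (div_nonneg hG hpos.le), div_mul_cancel₀ G hpos.ne']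

end Clipping

theorem clipped_pgd_combined_bound_general {n : ℕ} (Φ : Set (EuclideanSpace ℝ (Fin n)))
    (hΦcv : Convex ℝ Φ)
    (L : EuclideanSpace ℝ (Fin n) → ℝ) (L₀ : ℝ)
    (hdiff : Differentiable ℝ L)
    (hsmooth : ∀ x y, ‖gradient L x - gradient L y‖ ≤ L₀ * ‖x - y‖)
    (proj : EuclideanSpace ℝ (Fin n) → EuclideanSpace ℝ (Fin n))
    (hproj : ∀ x, proj x ∈ Φ ∧ ∀ y ∈ Φ, dist x (proj x) ≤ dist x y)
    (φStar : EuclideanSpace ℝ (Fin n)) (hφStar : φStar ∈ Φ)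
    (τ G : ℝ) (hτ : 0 < τ) (hG : 0 < G)
    (φ : EuclideanSpace ℝ (Fin n))
    (φPlus : EuclideanSpace ℝ (Fin n))
    (hupd : φPlus = proj (φ - τ • Clip G (gradient L φ))) :
    ‖φPlus - φStar‖ ^ 2 ≤
      (1 + τ * clipFactor G (gradient L φ) * L₀) * ‖φ - φStar‖ ^ 2
      + τ * (2 * clipFactor G (gradient L φ) * (L φStar - L φ) + τ * G ^ 2) := by
  set g := gradient L φ
  set c := clipFactor G g
  set u := φ - τ • Clip G g
  have hcontract : ‖φPlus - φStar‖ ≤ ‖u - φStar‖ := by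
    rw [hupd]
    exact hΦcv.norm_sub_le_of_forall_norm_sub_le (hproj u).1
      (fun y hy => by simpa only [dist_eq_norm] using (hproj u).2 y hy) hφStar
  have hexpand : ‖u - φStar‖ ^ 2
      = ‖φ - φStar‖ ^ 2 - 2 * (τ * c) * ⟪g, φ - φStar⟫ + τ ^ 2 * ‖Clip G g‖ ^ 2 := by
    rw [show u - φStar = (φ - φStar) - τ • Clip G g by simp only [u]; abel, norm_sub_sq_real,
      real_inner_smul_right, real_inner_comm, Clip_eq_clipFactor_smul, real_inner_smul_left,
      ← Clip_eq_clipFactor_smul, norm_smul, Real.norm_of_nonneg hτ.le]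
    ring
  have hdescent : ⟪g, φStar - φ⟫ ≤ L φStar - L φ + L₀ / 2 * ‖φStar - φ‖ ^ 2 :=
    inner_gradient_le_of_lipschitz_gradient hdiff (hsmooth φ) φStar
  rw [← neg_sub φ φStar, inner_neg_right, norm_neg] at hdescent
  have hclip : ‖Clip G g‖ ^ 2 ≤ G ^ 2 := pow_le_pow_left₀ (norm_nonneg _) (norm_Clip_le hG.le g) 2
  have hτc : 0 ≤ τ * c := mul_nonneg hτ.le (clipFactor_nonneg hG.le g)
  have hsq : ‖φPlus - φStar‖ ^ 2 ≤ ‖u - φStar‖ ^ 2 := pow_le_pow_left₀ (norm_nonneg _) hcontract 2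
  nlinarith [mul_le_mul_of_nonneg_left hdescent hτc, mul_le_mul_of_nonneg_left hclip (sq_nonneg τ)]

/-- Combined one-step bound for clipped projected gradient descent. -/
theorem clipped_pgd_combined_bound {n : ℕ} (Φ : Set (EuclideanSpace ℝ (Fin n)))
    (hΦne : Φ.Nonempty) (hΦcl : IsClosed Φ) (hΦcv : Convex ℝ Φ)
    (L : EuclideanSpace ℝ (Fin n) → ℝ) (L₀ : ℝ) (hL₀ : 0 ≤ L₀)
    (hdiff : Differentiable ℝ L)
    (hsmooth : ∀ x y, ‖gradient L x - gradient L y‖ ≤ L₀ * ‖x - y‖)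
    (proj : EuclideanSpace ℝ (Fin n) → EuclideanSpace ℝ (Fin n))
    (hproj : ∀ x, proj x ∈ Φ ∧ ∀ y ∈ Φ, dist x (proj x) ≤ dist x y)
    (φStar : EuclideanSpace ℝ (Fin n)) (hφStar : φStar ∈ Φ)
    (τ G : ℝ) (hτ : 0 < τ) (hG : 0 < G)
    (φ : EuclideanSpace ℝ (Fin n)) (hφ : φ ∈ Φ)
    (φPlus : EuclideanSpace ℝ (Fin n))
    (hupd : φPlus = proj (φ - τ • Clip G (gradient L φ))) :
    ‖φPlus - φStar‖ ^ 2 ≤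
      (1 + τ * clipFactor G (gradient L φ) * L₀) * ‖φ - φStar‖ ^ 2
      + τ * (2 * clipFactor G (gradient L φ) * (L φStar - L φ) + τ * G ^ 2) :=
  clipped_pgd_combined_bound_general Φ hΦcv L L₀ hdiff hsmooth proj hproj φStar hφStar τ G hτ hG φ
    φPlus hupd
end

section
/- Convergence to near-optimal region (Theorem 3 core): let Φ ⊆ R^n be nonempty compact convex, L : R^n → R differentiable and L₀-smooth with a minimizer φ* over Φ and C = L(φ*). Fix τ, G, ε > 0 and define φ_{w+1} = Proj_Φ(φ_w − τ·Clip(∇L(φ_w))) from φ_0 ∈ Φ. Suppose that for all w < H the 'sufficient decrease' condition 2F(φ_w)(L(φ*) − L(φ_w)) + τG² ≤ −2ε holds and the per-step bound ‖φ_{w+1} − φ*‖² ≤ ‖φ_w − φ*‖² + τ(2F(φ_w)(L(φ*) − L(φ_w)) + τG²) holds, where F(φ)=min(1, G/‖∇L(φ)‖). Then H ≤ ‖φ_0 − φ*‖²/(2τε), and at the first index H where the sufficient decrease condition fails, C ≤ L(φ_H) ≤ C + (2ε + τG²)/(2F(φ_H)). -/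
open RealInnerProductSpace

/-- Convergence to the near-optimal region (core of Theorem 3). -/
theorem convergence_to_near_optimal_region {n : ℕ}
    (Φ : Set (EuclideanSpace ℝ (Fin n)))
    (hΦne : Φ.Nonempty) (hΦcp : IsCompact Φ) (hΦcv : Convex ℝ Φ)
    (L : EuclideanSpace ℝ (Fin n) → ℝ) (L₀ : ℝ) (hL₀ : 0 ≤ L₀)
    (hdiff : Differentiable ℝ L)
    (hsmooth : ∀ x y, ‖gradient L x - gradient L y‖ ≤ L₀ * ‖x - y‖)
    (φStar : EuclideanSpace ℝ (Fin n)) (hφStar : φStar ∈ Φ)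
    (hmin : ∀ ψ ∈ Φ, L φStar ≤ L ψ)
    (C : ℝ) (hC : C = L φStar)
    (τ G ε : ℝ) (hτ : 0 < τ) (hG : 0 < G) (hε : 0 < ε)
    (proj : EuclideanSpace ℝ (Fin n) → EuclideanSpace ℝ (Fin n))
    (hproj : ∀ x, proj x ∈ Φ ∧ ∀ y ∈ Φ, dist x (proj x) ≤ dist x y)
    (φ : ℕ → EuclideanSpace ℝ (Fin n)) (hφ0 : φ 0 ∈ Φ)
    (hupd : ∀ w, φ (w + 1) = proj (φ w - τ • Clip G (gradient L (φ w))))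
    (H : ℕ)
    (hdec : ∀ w < H,
      2 * clipFactor G (gradient L (φ w)) * (L φStar - L (φ w)) + τ * G ^ 2 ≤ -2 * ε)
    (hstep : ∀ w < H,
      ‖φ (w + 1) - φStar‖ ^ 2 ≤ ‖φ w - φStar‖ ^ 2
        + τ * (2 * clipFactor G (gradient L (φ w)) * (L φStar - L (φ w)) + τ * G ^ 2))
    (hfail : ¬ (2 * clipFactor G (gradient L (φ H)) * (L φStar - L (φ H)) + τ * G ^ 2
        ≤ -2 * ε)) :
    (H : ℝ) ≤ ‖φ 0 - φStar‖ ^ 2 / (2 * τ * ε) ∧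
    C ≤ L (φ H) ∧
    L (φ H) ≤ C + (2 * ε + τ * G ^ 2) / (2 * clipFactor G (gradient L (φ H))) := by
  have hmem : ∀ w, φ w ∈ Φ := by
    intro w
    cases w with
    | zero => exact hφ0
    | succ k => rw [hupd k]; exact (hproj _).1
  have hFpos : ∀ v : EuclideanSpace ℝ (Fin n), 0 < clipFactor G v := by
    intro v
    unfold clipFactor
    split
    · norm_num
    · exact lt_min one_pos (div_pos hG (norm_pos_iff.mpr (by assumption)))
  have key : ∀ w ≤ H, ‖φ w - φStar‖ ^ 2 ≤ ‖φ 0 - φStar‖ ^ 2 - 2 * τ * ε * w := by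
    intro w hw
    induction w with
    | zero => simp
    | succ k ih =>
      have hk : k < H := Nat.lt_of_succ_le hw
      have h1 := hstep k hk
      have h2 := hdec k hk
      have ih' := ih (le_of_lt hk)
      have : τ * (2 * clipFactor G (gradient L (φ k)) * (L φStar - L (φ k)) + τ * G ^ 2)
          ≤ τ * (-2 * ε) := by
        apply mul_le_mul_of_nonneg_left h2 (le_of_lt hτ)
      push_cast
      nlinarith
  have hH : (H : ℝ) ≤ ‖φ 0 - φStar‖ ^ 2 / (2 * τ * ε) := by
    have h0 := key H le_rfl
    have hnn : (0 : ℝ) ≤ ‖φ H - φStar‖ ^ 2 := sq_nonneg _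
    rw [le_div_iff₀ (by positivity)]
    nlinarith
  have hlow : C ≤ L (φ H) := hC ▸ hmin _ (hmem H)
  refine ⟨hH, hlow, ?_⟩
  have hFp := hFpos (gradient L (φ H))
  push_neg at hfail
  rw [hC, ← sub_le_iff_le_add', le_div_iff₀ (by linarith)]
  nlinarith
end
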